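/- arXiv:1010.5223 — 2 statements merged into one kernel-verified Lean document; each statement's English description precedes it below -/
import Mathlib

section
/- For all a, b, τ > 0 with |1 − 1/τ²| < 1, s ∈ ℝ, and t ∈ ℝ: if κ is distributed according to the hypergeometric-beta density π_{a,b,τ,s}, then its moment-generating function satisfies E[e^{tκ}] = ∫₀¹ e^{tκ} π_{a,b,τ,s}(κ) dκ = e^{t} Φ₁(b, 1; a+b; s−t, 1−1/τ²) / Φ₁(b, 1; a+b; s, 1−1/τ²). -/
/-! Substituting `κ ↦ 1 - κ` turns `C(a,b,τ,s)` into `e^{-s}` times the Euler-type integral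
`∫₀¹ x^{b-1} (1-x)^{a-1} (1-yx)^{-1} e^{sx} dx` with `y = 1 - 1/τ²`. Expanding `e^{sx}` and the
geometric series `(1-yx)^{-1}` and integrating term by term against Beta integrals
(`B(b+k, a) = B(b,a) (b)_k / (a+b)_k`) gives `C(a,b,τ,s) = e^{-s} B(b,a) Φ₁(b,1;a+b;s,y)`.
Multiplying the kernel by `e^{tκ}` replaces `s` by `s - t`, so the moment generating function is
`C(a,b,τ,s-t) / C(a,b,τ,s)`, and the factors `B(b,a)` cancel. -/

open MeasureTheory Set

/-- The unnormalized hypergeometric-beta kernel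
`κ^{a−1} (1−κ)^{b−1} {1/τ² + (1 − 1/τ²)κ}^{−1} e^{−sκ}`. -/
noncomputable def hbKer (a b τ s κ : ℝ) : ℝ :=
  κ ^ (a - 1) * (1 - κ) ^ (b - 1) * (1 / τ ^ 2 + (1 - 1 / τ ^ 2) * κ)⁻¹ *
    Real.exp (-(s * κ))

/-- The normalizing constant `C(a,b,τ,s)`. -/
noncomputable def hbC (a b τ s : ℝ) : ℝ :=
  ∫ κ in Set.Ioo (0 : ℝ) 1, hbKer a b τ s κ

/-- The hypergeometric-beta density `π_{a,b,τ,s}` on `(0,1)`. -/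
noncomputable def hbPdf (a b τ s κ : ℝ) : ℝ :=
  (hbC a b τ s)⁻¹ * hbKer a b τ s κ

/-- The rising factorial `(q)_k = q (q+1) ⋯ (q+k−1)`. -/
noncomputable def risingFac (q : ℝ) (k : ℕ) : ℝ :=
  ∏ i ∈ Finset.range k, (q + (i : ℝ))

/-- The degenerate (Humbert) hypergeometric function of two variables
`Φ₁(α, β; γ; x, y) = Σ_{m,n≥0} [(α)_{m+n} (β)_n / ((γ)_{m+n} m! n!)] x^m y^n`. -/
noncomputable def Phi1 (α β γ x y : ℝ) : ℝ :=
  ∑' p : ℕ × ℕ,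
    risingFac α (p.1 + p.2) * risingFac β p.2 /
      (risingFac γ (p.1 + p.2) * (Nat.factorial p.1) * (Nat.factorial p.2)) *
      x ^ p.1 * y ^ p.2

/-- The Euler beta function `B(a,b) = Γ(a)Γ(b)/Γ(a+b)`. -/
noncomputable def betaFn (a b : ℝ) : ℝ :=
  Real.Gamma a * Real.Gamma b / Real.Gamma (a + b)

lemma risingFac_one (n : ℕ) : risingFac 1 n = n.factorial := by
  rw [risingFac, ← Finset.prod_range_add_one_eq_factorial n]
  push_cast
  exact Finset.prod_congr rfl fun i _ => add_comm _ _

lemma risingFac_pos {q : ℝ} (hq : 0 < q) (k : ℕ) : 0 < risingFac q k :=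
  Finset.prod_pos fun i _ => by positivity

lemma Gamma_add_nat_eq_mul_risingFac {q : ℝ} (hq : 0 < q) (k : ℕ) :
    Real.Gamma (q + k) = Real.Gamma q * risingFac q k := by
  induction k with
  | zero => simp [risingFac]
  | succ n ih =>
    rw [Nat.cast_succ, ← add_assoc, Real.Gamma_add_one (by positivity), ih]
    simp only [risingFac, Finset.prod_range_succ]
    ring

lemma betaFn_pos {u v : ℝ} (hu : 0 < u) (hv : 0 < v) : 0 < betaFn u v :=
  ProbabilityTheory.beta_pos hu hv

lemma betaFn_add_nat {u v : ℝ} (hu : 0 < u) (hv : 0 < v) (k : ℕ) :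
    betaFn (u + k) v = betaFn u v * risingFac u k / risingFac (u + v) k := by
  have hΓ : Real.Gamma (u + v) ≠ 0 := (Real.Gamma_pos_of_pos (by positivity)).ne'
  have hr : risingFac (u + v) k ≠ 0 := (risingFac_pos (by positivity) k).ne'
  rw [betaFn, betaFn, add_right_comm, Gamma_add_nat_eq_mul_risingFac hu,
    Gamma_add_nat_eq_mul_risingFac (by positivity)]
  field_simp

lemma ofReal_rpow_mul_one_sub_rpow {x : ℝ} (hx : x ∈ Ioo (0 : ℝ) 1) (u v : ℝ) :
    ((x ^ (u - 1) * (1 - x) ^ (v - 1) : ℝ) : ℂ) =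
      (x : ℂ) ^ ((u : ℂ) - 1) * (1 - (x : ℂ)) ^ ((v : ℂ) - 1) := by
  rw [Complex.ofReal_mul, Complex.ofReal_cpow hx.1.le,
    Complex.ofReal_cpow (sub_nonneg.mpr hx.2.le)]
  push_cast
  rfl

lemma integrableOn_rpow_mul_one_sub_rpow {u v : ℝ} (hu : 0 < u) (hv : 0 < v) :
    IntegrableOn (fun x : ℝ => x ^ (u - 1) * (1 - x) ^ (v - 1)) (Ioo 0 1) := by
  have hc := Complex.betaIntegral_convergent (u := u) (v := v) (by simpa) (by simpa)
  rw [intervalIntegrable_iff_integrableOn_Ioo_of_le zero_le_one] at hc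
  refine IntegrableOn.congr_fun (Integrable.re hc) (fun x hx => ?_) measurableSet_Ioo
  simp [← ofReal_rpow_mul_one_sub_rpow hx]

lemma integral_rpow_mul_one_sub_rpow {u v : ℝ} (hu : 0 < u) (hv : 0 < v) :
    ∫ x in Ioo (0 : ℝ) 1, x ^ (u - 1) * (1 - x) ^ (v - 1) = betaFn u v := by
  have hc := Complex.betaIntegral_convergent (u := u) (v := v) (by simpa) (by simpa)
  rw [intervalIntegrable_iff_integrableOn_Ioo_of_le zero_le_one] at hc
  rw [betaFn, ← ProbabilityTheory.beta, ProbabilityTheory.beta_eq_betaIntegralReal u v hu hv,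
    Complex.betaIntegral, intervalIntegral.integral_of_le zero_le_one,
    integral_Ioc_eq_integral_Ioo, ← RCLike.re_to_complex, ← integral_re hc]
  refine setIntegral_congr_fun measurableSet_Ioo fun x hx => ?_
  simp [← ofReal_rpow_mul_one_sub_rpow hx]

lemma hasSum_pow_div_factorial_mul_geometric (z : ℝ) {r : ℝ} (hr : |r| < 1) :
    HasSum (fun p : ℕ × ℕ => z ^ p.1 / p.1.factorial * r ^ p.2)
      (Real.exp z * (1 - r)⁻¹) := by
  have hexp : HasSum (fun m : ℕ => z ^ m / m.factorial) (Real.exp z) := by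
    rw [Real.exp_eq_exp_ℝ]
    exact NormedSpace.expSeries_div_hasSum_exp z
  have hexp_norm : Summable fun m : ℕ => ‖z ^ m / m.factorial‖ :=
    (Real.summable_pow_div_factorial |z|).congr fun m => by simp
  have hgeom_norm : Summable fun n : ℕ => ‖r ^ n‖ := by
    simpa using summable_geometric_of_lt_one (abs_nonneg r) hr
  exact hexp.mul (hasSum_geometric_of_abs_lt_one hr)
    (summable_mul_of_summable_norm hexp_norm hgeom_norm)

noncomputable def phi1Term (α β γ x y : ℝ) (p : ℕ × ℕ) : ℝ :=
  risingFac α (p.1 + p.2) * risingFac β p.2 /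
    (risingFac γ (p.1 + p.2) * (Nat.factorial p.1) * (Nat.factorial p.2)) * x ^ p.1 * y ^ p.2

lemma Phi1_eq_tsum_phi1Term (α β γ x y : ℝ) :
    Phi1 α β γ x y = ∑' p, phi1Term α β γ x y p := rfl

noncomputable def eulerTerm (u v z y : ℝ) (p : ℕ × ℕ) (x : ℝ) : ℝ :=
  x ^ (u - 1) * (1 - x) ^ (v - 1) * ((z * x) ^ p.1 / p.1.factorial * (y * x) ^ p.2)

section EulerTerm

variable {u v : ℝ} (z y : ℝ) (p : ℕ × ℕ)

lemma eulerTerm_eq {x : ℝ} (hx : 0 < x) :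
    eulerTerm u v z y p x = z ^ p.1 / p.1.factorial * y ^ p.2 *
      (x ^ (u + (p.1 + p.2 : ℕ) - 1) * (1 - x) ^ (v - 1)) := by
  rw [eulerTerm, add_sub_right_comm, Real.rpow_add hx, Real.rpow_natCast, pow_add, mul_pow,
    mul_pow]
  ring

lemma integrableOn_eulerTerm (hu : 0 < u) (hv : 0 < v) :
    IntegrableOn (eulerTerm u v z y p) (Ioo 0 1) :=
  IntegrableOn.congr_fun ((integrableOn_rpow_mul_one_sub_rpow (by positivity) hv).const_mul _)
    (fun _ hx => (eulerTerm_eq z y p hx.1).symm) measurableSet_Ioo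

lemma integral_eulerTerm (hu : 0 < u) (hv : 0 < v) :
    ∫ x in Ioo (0 : ℝ) 1, eulerTerm u v z y p x = betaFn u v * phi1Term u 1 (u + v) z y p := by
  have hr : risingFac (u + v) (p.1 + p.2) ≠ 0 := (risingFac_pos (by positivity) _).ne'
  rw [setIntegral_congr_fun measurableSet_Ioo fun _ hx => eulerTerm_eq z y p hx.1,
    integral_const_mul, integral_rpow_mul_one_sub_rpow (by positivity) hv, betaFn_add_nat hu hv,
    phi1Term, risingFac_one]
  field_simp

lemma norm_eulerTerm_le {x : ℝ} (hx : x ∈ Ioo (0 : ℝ) 1) :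
    ‖eulerTerm u v z y p x‖ ≤
      |z| ^ p.1 / p.1.factorial * |y| ^ p.2 * (x ^ (u - 1) * (1 - x) ^ (v - 1)) := by
  have hw : 0 ≤ x ^ (u - 1) * (1 - x) ^ (v - 1) :=
    mul_nonneg (Real.rpow_nonneg hx.1.le _) (Real.rpow_nonneg (sub_nonneg.mpr hx.2.le) _)
  have hx1 : |x| ≤ 1 := by rw [abs_of_pos hx.1]; exact hx.2.le
  rw [eulerTerm, Real.norm_eq_abs, abs_mul, abs_of_nonneg hw, abs_mul, abs_div, abs_pow, abs_pow,
    Nat.abs_cast, abs_mul, abs_mul, mul_comm]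
  gcongr
  · exact mul_le_of_le_one_right (abs_nonneg z) hx1
  · exact mul_le_of_le_one_right (abs_nonneg y) hx1

lemma hasSum_eulerTerm {y : ℝ} (hy : |y| < 1) {x : ℝ} (hx : x ∈ Ioo (0 : ℝ) 1) :
    HasSum (fun p => eulerTerm u v z y p x)
      (x ^ (u - 1) * (1 - x) ^ (v - 1) * (1 - y * x)⁻¹ * Real.exp (z * x)) := by
  have hyx : |y * x| < 1 := by
    rw [abs_mul, abs_of_pos hx.1]
    exact mul_lt_one_of_nonneg_of_lt_one_left (abs_nonneg y) hy hx.2.le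
  have h := (hasSum_pow_div_factorial_mul_geometric (z * x) hyx).mul_left
    (x ^ (u - 1) * (1 - x) ^ (v - 1))
  rwa [mul_comm (Real.exp _), ← mul_assoc] at h

end EulerTerm

lemma euler_integral_Phi1 {u v : ℝ} (hu : 0 < u) (hv : 0 < v) (z : ℝ) {y : ℝ} (hy : |y| < 1) :
    ∫ x in Ioo (0 : ℝ) 1, x ^ (u - 1) * (1 - x) ^ (v - 1) * (1 - y * x)⁻¹ * Real.exp (z * x) =
      betaFn u v * Phi1 u 1 (u + v) z y := by
  have hy' : |(|y|)| < 1 := by rwa [abs_abs]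
  have hbound := fun x => (hasSum_pow_div_factorial_mul_geometric |z| hy').mul_right
    (x ^ (u - 1) * (1 - x) ^ (v - 1))
  have hsum := hasSum_integral_of_dominated_convergence
    (μ := volume.restrict (Ioo 0 1)) (F := eulerTerm u v z y)
    (fun p x => |z| ^ p.1 / p.1.factorial * |y| ^ p.2 * (x ^ (u - 1) * (1 - x) ^ (v - 1)))
    (fun p => (integrableOn_eulerTerm z y p hu hv).aestronglyMeasurable)
    (fun p => (ae_restrict_iff' measurableSet_Ioo).mpr
      (.of_forall fun _ => norm_eulerTerm_le z y p))
    (.of_forall fun x => (hbound x).summable)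
    (by simpa only [(hbound _).tsum_eq] using
      (integrableOn_rpow_mul_one_sub_rpow hu hv).const_mul _)
    ((ae_restrict_iff' measurableSet_Ioo).mpr (.of_forall fun _ => hasSum_eulerTerm z hy))
  rw [← hsum.tsum_eq, Phi1_eq_tsum_phi1Term, ← tsum_mul_left]
  exact tsum_congr fun p => integral_eulerTerm z y p hu hv

lemma integral_Ioo_zero_one_comp_one_sub (f : ℝ → ℝ) :
    ∫ x in Ioo (0 : ℝ) 1, f (1 - x) = ∫ x in Ioo (0 : ℝ) 1, f x := by
  simp only [← integral_Ioc_eq_integral_Ioo, ← intervalIntegral.integral_of_le zero_le_one,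
    intervalIntegral.integral_comp_sub_left f 1, sub_zero, sub_self]

lemma hbKer_one_sub (a b τ s : ℝ) {x : ℝ} :
    hbKer a b τ s (1 - x) = Real.exp (-s) * (x ^ (b - 1) * (1 - x) ^ (a - 1) *
      (1 - (1 - 1 / τ ^ 2) * x)⁻¹ * Real.exp (s * x)) := by
  rw [hbKer, sub_sub_cancel, show -(s * (1 - x)) = -s + s * x by ring, Real.exp_add,
    show 1 / τ ^ 2 + (1 - 1 / τ ^ 2) * (1 - x) = 1 - (1 - 1 / τ ^ 2) * x by ring]
  ring

lemma hbC_eq_exp_mul_betaFn_mul_Phi1 {a b : ℝ} (ha : 0 < a) (hb : 0 < b) {τ : ℝ}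
    (hτ : |1 - 1 / τ ^ 2| < 1) (s : ℝ) :
    hbC a b τ s = Real.exp (-s) * (betaFn b a * Phi1 b 1 (a + b) s (1 - 1 / τ ^ 2)) := by
  simp_rw [hbC, ← integral_Ioo_zero_one_comp_one_sub (hbKer a b τ s), hbKer_one_sub,
    integral_const_mul, euler_integral_Phi1 hb ha s hτ, add_comm b a]

lemma exp_mul_hbKer (a b τ s t κ : ℝ) :
    Real.exp (t * κ) * hbKer a b τ s κ = hbKer a b τ (s - t) κ := by
  rw [hbKer, hbKer, show -((s - t) * κ) = t * κ + -(s * κ) by ring, Real.exp_add]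
  ring

theorem hb_moment_generating_function_general (a b τ s t : ℝ) (ha : 0 < a) (hb : 0 < b)
    (hτ' : |1 - 1 / τ ^ 2| < 1) :
    ∫ κ in Set.Ioo (0 : ℝ) 1, Real.exp (t * κ) * hbPdf a b τ s κ =
      Real.exp t * Phi1 b 1 (a + b) (s - t) (1 - 1 / τ ^ 2) /
        Phi1 b 1 (a + b) s (1 - 1 / τ ^ 2) := by
  have hB : betaFn b a ≠ 0 := (betaFn_pos hb ha).ne'
  simp_rw [hbPdf, mul_left_comm (Real.exp _), exp_mul_hbKer, integral_const_mul]
  rw [← hbC, hbC_eq_exp_mul_betaFn_mul_Phi1 ha hb hτ', hbC_eq_exp_mul_betaFn_mul_Phi1 ha hb hτ',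
    neg_sub, Real.exp_sub, Real.exp_neg]
  -- no positivity of `Φ₁(b,1;a+b;s,y)` is needed: if it vanishes, both sides are `0` (`0⁻¹ = 0`)
  field_simp

theorem hb_moment_generating_function (a b τ s t : ℝ) (ha : 0 < a) (hb : 0 < b)
    (hτ : 0 < τ) (hτ' : |1 - 1 / τ ^ 2| < 1) :
    ∫ κ in Set.Ioo (0 : ℝ) 1, Real.exp (t * κ) * hbPdf a b τ s κ =
      Real.exp t * Phi1 b 1 (a + b) (s - t) (1 - 1 / τ ^ 2) /
        Phi1 b 1 (a + b) s (1 - 1 / τ ^ 2) :=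
  hb_moment_generating_function_general a b τ s t ha hb hτ'
end

section
/- Let a, b, τ > 0, s ∈ ℝ, σ > 0, and y ∈ ℝ. Define the joint density on ℝ × (0,1): f(β, κ) = N(y; β, σ²) N(β; 0, σ²(1/κ − 1)) π_{a,b,τ,s}(κ), and for any function h(β, κ) let E[h | y] = [∬ h f] / [∬ f]. Then the posterior variance Var(β | y) := E[β² | y] − (E[β | y])² satisfies the decomposition Var(β | y) = σ²(1 − E[κ | y]) + y² · Var(κ | y), where Var(κ | y) = E[κ² | y] − (E[κ | y])². -/
open MeasureTheory Set

/-- The normal density with mean `μ` and variance `v`. -/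
noncomputable def normPdf (y μ v : ℝ) : ℝ :=
  (2 * Real.pi * v) ^ (-(1 : ℝ) / 2) * Real.exp (-((y - μ) ^ 2) / (2 * v))

/-- The joint density `f(β, κ) = N(y; β, σ²) N(β; 0, σ²(1/κ − 1)) π_{a,b,τ,s}(κ)`. -/
noncomputable def jointF (a b τ s σ y β κ : ℝ) : ℝ :=
  normPdf y β (σ ^ 2) * normPdf β 0 (σ ^ 2 * (1 / κ - 1)) * hbPdf a b τ s κ

/-!
Fix `κ ∈ (0,1)`. The Gaussian conjugacy identity
`N(y; β, σ²) N(β; 0, σ²(1/κ − 1)) = N(y; 0, σ²/κ) N(β; (1 − κ)y, σ²(1 − κ))`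
shows that, given `κ` and `y`, `β` is normal with mean `(1 − κ)y` and variance `σ²(1 − κ)`.
Integrating out `β` therefore turns `β`, `β²`, `κ`, `κ²` into quadratic polynomials in `κ`
weighted by `N(y; 0, σ²/κ) π(κ)`, and the claim is the law of total variance
`Var(β | y) = E[σ²(1 − κ) | y] + Var((1 − κ)y | y)`. The weight has positive integral because
`a, b > 0` makes the beta kernel, and hence `C(a,b,τ,s)`, finite and positive.
-/

open Real ProbabilityTheory

section NormalDensity

variable {v w : ℝ}

lemma normPdf_eq_gaussianPDFReal (hv : 0 ≤ v) (x m : ℝ) :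
    normPdf x m v = gaussianPDFReal m v.toNNReal x := by
  rw [normPdf, gaussianPDFReal, Real.coe_toNNReal v hv, Real.sqrt_eq_rpow, ← Real.rpow_neg
    (by positivity), neg_div]

lemma normPdf_pos (hv : 0 < v) (x m : ℝ) : 0 < normPdf x m v := by
  unfold normPdf; positivity

lemma normPdf_le (hv : 0 < v) (x m : ℝ) : normPdf x m v ≤ (2 * π * v) ^ (-(1 : ℝ) / 2) := by
  refine mul_le_of_le_one_right (by positivity) (Real.exp_le_one_iff.mpr ?_)
  exact div_nonpos_of_nonpos_of_nonneg (neg_nonpos.mpr (sq_nonneg _)) (by positivity)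

lemma integral_normPdf (hv : 0 < v) (m : ℝ) : ∫ x, normPdf x m v = 1 := by
  simp_rw [normPdf_eq_gaussianPDFReal hv.le]
  exact integral_gaussianPDFReal_eq_one m (by simpa using hv)

lemma integral_mul_normPdf (hv : 0 < v) (m : ℝ) : ∫ x, x * normPdf x m v = m := by
  simp_rw [normPdf_eq_gaussianPDFReal hv.le, mul_comm _ (gaussianPDFReal _ _ _), ← smul_eq_mul]
  rw [← integral_gaussianReal_eq_integral_smul (by simpa using hv)]
  exact integral_id_gaussianReal

lemma integral_sq_mul_normPdf (hv : 0 < v) (m : ℝ) : ∫ x, x ^ 2 * normPdf x m v = v + m ^ 2 := by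
  simp_rw [normPdf_eq_gaussianPDFReal hv.le, mul_comm _ (gaussianPDFReal _ _ _), ← smul_eq_mul]
  rw [← integral_gaussianReal_eq_integral_smul (by simpa using hv)]
  have hvar := variance_eq_sub (memLp_id_gaussianReal (μ := m) (v := v.toNNReal) 2)
  simp only [variance_id_gaussianReal, Pi.pow_apply, id_eq, integral_id_gaussianReal,
    Real.coe_toNNReal v hv.le] at hvar
  linarith

lemma normPdf_mul_normPdf (hv : 0 < v) (hw : 0 < w) (x y : ℝ) :
    normPdf y x v * normPdf x 0 w
      = normPdf y 0 (v + w) * normPdf x (w * y / (v + w)) (v * w / (v + w)) := by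
  have hvw : 0 < v + w := by positivity
  have hc : (2 * π * v) * (2 * π * w) = (2 * π * (v + w)) * (2 * π * (v * w / (v + w))) := by
    field_simp
  unfold normPdf
  rw [mul_mul_mul_comm, ← Real.mul_rpow (by positivity) (by positivity), mul_mul_mul_comm
    (_ ^ _), ← Real.mul_rpow (by positivity) (by positivity), hc, ← Real.exp_add,
    ← Real.exp_add]
  congr 2
  field_simp
  ring

end NormalDensity

lemma integrableOn_rpow_mul_one_sub_rpow_s7 {a b : ℝ} (ha : 0 < a) (hb : 0 < b) :
    IntegrableOn (fun x : ℝ ↦ x ^ (a - 1) * (1 - x) ^ (b - 1)) (Ioo 0 1) := by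
  have hpdf : Integrable (betaPDFReal a b) := by
    have h := integrable_toReal_of_lintegral_ne_top (f := betaPDF a b) (μ := volume)
      (measurable_betaPDFReal a b).ennreal_ofReal.aemeasurable
      (by simp [lintegral_betaPDF_eq_one ha hb])
    refine h.congr (ae_of_all _ fun x ↦ ENNReal.toReal_ofReal ?_)
    by_cases hx : 0 < x ∧ x < 1
    · exact (betaPDFReal_pos hx.1 hx.2 ha hb).le
    · simp [betaPDFReal, hx]
  refine IntegrableOn.congr_fun (hpdf.integrableOn.const_mul (beta a b)) (fun x hx ↦ ?_)
    measurableSet_Ioo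
  rw [betaPDFReal, if_pos ⟨hx.1, hx.2⟩]
  field_simp [(beta_pos ha hb).ne']

lemma setIntegral_Ioo_pos {f : ℝ → ℝ} (hf : IntegrableOn f (Ioo 0 1))
    (hpos : ∀ x ∈ Ioo (0 : ℝ) 1, 0 < f x) : 0 < ∫ x in Ioo (0 : ℝ) 1, f x := by
  rw [← integral_Ioc_eq_integral_Ioo, ← intervalIntegral.integral_of_le zero_le_one]
  exact intervalIntegral.intervalIntegral_pos_of_pos_on
    ((intervalIntegrable_iff_integrableOn_Ioo_of_le zero_le_one).mpr hf) hpos zero_lt_one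

lemma integrableOn_Ioo_pow_mul {f : ℝ → ℝ} (hf : IntegrableOn f (Ioo 0 1)) (n : ℕ) :
    IntegrableOn (fun x ↦ x ^ n * f x) (Ioo 0 1) := by
  refine hf.bdd_mul (c := 1) (by fun_prop) ?_
  filter_upwards [ae_restrict_mem measurableSet_Ioo] with x hx
  rw [norm_pow, Real.norm_of_nonneg hx.1.le]
  exact pow_le_one₀ hx.1.le hx.2.le

lemma setIntegral_Ioo_quadratic_mul {f g : ℝ → ℝ} (hg : IntegrableOn g (Ioo 0 1))
    {c₀ c₁ c₂ : ℝ} (hf : ∀ x ∈ Ioo (0 : ℝ) 1, f x = (c₀ + c₁ * x + c₂ * x ^ 2) * g x) :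
    ∫ x in Ioo 0 1, f x = c₀ * (∫ x in Ioo 0 1, g x) + c₁ * (∫ x in Ioo 0 1, x * g x)
      + c₂ * ∫ x in Ioo 0 1, x ^ 2 * g x := by
  have hg₁ : IntegrableOn (fun x ↦ x * g x) (Ioo 0 1) := by
    simpa using integrableOn_Ioo_pow_mul hg 1
  have hg₂ := integrableOn_Ioo_pow_mul hg 2
  rw [setIntegral_congr_fun measurableSet_Ioo hf]
  simp_rw [add_mul, mul_assoc]
  rw [integral_add, integral_add, integral_const_mul, integral_const_mul, integral_const_mul]
  exacts [hg.const_mul _, hg₁.const_mul _, (hg.const_mul _).add (hg₁.const_mul _),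
    hg₂.const_mul _]

section HypergeometricBeta

variable {a b τ s κ : ℝ}

lemma min_le_hbDenom (hκ : κ ∈ Icc (0 : ℝ) 1) :
    min (1 / τ ^ 2) 1 ≤ 1 / τ ^ 2 + (1 - 1 / τ ^ 2) * κ := by
  nlinarith [min_le_left (1 / τ ^ 2) 1, min_le_right (1 / τ ^ 2) 1, hκ.1, hκ.2]

lemma hbDenom_pos (hτ : τ ≠ 0) (hκ : κ ∈ Icc (0 : ℝ) 1) :
    0 < 1 / τ ^ 2 + (1 - 1 / τ ^ 2) * κ :=
  (lt_min (by positivity) one_pos).trans_le (min_le_hbDenom hκ)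

lemma hbKer_pos (hτ : τ ≠ 0) (hκ : κ ∈ Ioo (0 : ℝ) 1) : 0 < hbKer a b τ s κ := by
  have hdenom := hbDenom_pos hτ (Ioo_subset_Icc_self hκ)
  have hκ₀ := hκ.1
  have hκ₁ := sub_pos.mpr hκ.2
  unfold hbKer
  positivity

lemma integrableOn_hbKer (ha : 0 < a) (hb : 0 < b) (hτ : τ ≠ 0) :
    IntegrableOn (hbKer a b τ s) (Ioo 0 1) := by
  have hbound : ∀ᵐ κ ∂volume.restrict (Ioo (0 : ℝ) 1),
      ‖(1 / τ ^ 2 + (1 - 1 / τ ^ 2) * κ)⁻¹ * Real.exp (-(s * κ))‖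
        ≤ (min (1 / τ ^ 2) 1)⁻¹ * Real.exp |s| := by
    filter_upwards [ae_restrict_mem measurableSet_Ioo] with κ hκ
    have hκ' := Ioo_subset_Icc_self hκ
    rw [norm_mul, Real.norm_of_nonneg (inv_nonneg.mpr (hbDenom_pos hτ hκ').le),
      Real.norm_of_nonneg (Real.exp_pos _).le]
    gcongr ?_ * Real.exp ?_
    · exact inv_anti₀ (lt_min (by positivity) one_pos) (min_le_hbDenom hκ')
    · calc -(s * κ) ≤ |s * κ| := neg_le_abs _
        _ = |s| * κ := by rw [abs_mul, abs_of_pos hκ.1]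
        _ ≤ |s| := mul_le_of_le_one_right (abs_nonneg s) hκ.2.le
  refine IntegrableOn.congr_fun ((integrableOn_rpow_mul_one_sub_rpow_s7 ha hb).bdd_mul
    (by fun_prop) hbound) (fun κ _ ↦ ?_) measurableSet_Ioo
  simp only [hbKer]
  ring

lemma hbC_pos (ha : 0 < a) (hb : 0 < b) (hτ : τ ≠ 0) : 0 < hbC a b τ s :=
  setIntegral_Ioo_pos (integrableOn_hbKer ha hb hτ) fun _ hκ ↦ hbKer_pos hτ hκ

lemma hbPdf_pos (ha : 0 < a) (hb : 0 < b) (hτ : τ ≠ 0) (hκ : κ ∈ Ioo (0 : ℝ) 1) :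
    0 < hbPdf a b τ s κ :=
  mul_pos (inv_pos.mpr (hbC_pos ha hb hτ)) (hbKer_pos hτ hκ)

lemma integrableOn_hbPdf (ha : 0 < a) (hb : 0 < b) (hτ : τ ≠ 0) :
    IntegrableOn (hbPdf a b τ s) (Ioo 0 1) :=
  (integrableOn_hbKer ha hb hτ).const_mul _

end HypergeometricBeta

noncomputable def marginalF (a b τ s σ y κ : ℝ) : ℝ :=
  normPdf y 0 (σ ^ 2 / κ) * hbPdf a b τ s κ

section Posterior

variable {a b τ s σ y κ : ℝ}

lemma jointF_eq_marginalF_mul_normPdf (hσ : σ ≠ 0) (hκ : κ ∈ Ioo (0 : ℝ) 1) (β : ℝ) :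
    jointF a b τ s σ y β κ
      = marginalF a b τ s σ y κ * normPdf β ((1 - κ) * y) (σ ^ 2 * (1 - κ)) := by
  obtain ⟨hκ₀, hκ₁⟩ := hκ
  have hw : 0 < σ ^ 2 * (1 / κ - 1) := by
    have : 1 < 1 / κ := by rwa [lt_one_div one_pos hκ₀, div_one]
    have := sub_pos.mpr this
    positivity
  have hsum : σ ^ 2 + σ ^ 2 * (1 / κ - 1) = σ ^ 2 / κ := by field_simp; ring
  have hmean : σ ^ 2 * (1 / κ - 1) * y / (σ ^ 2 / κ) = (1 - κ) * y := by field_simp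
  have hvar : σ ^ 2 * (σ ^ 2 * (1 / κ - 1)) / (σ ^ 2 / κ) = σ ^ 2 * (1 - κ) := by field_simp
  rw [jointF, normPdf_mul_normPdf (by positivity) hw, hsum, hmean, hvar, marginalF]
  ring

lemma integral_jointF (hσ : σ ≠ 0) (hκ : κ ∈ Ioo (0 : ℝ) 1) :
    ∫ β, jointF a b τ s σ y β κ = marginalF a b τ s σ y κ := by
  have hv : 0 < σ ^ 2 * (1 - κ) := by have := sub_pos.mpr hκ.2; positivity
  simp_rw [jointF_eq_marginalF_mul_normPdf hσ hκ]
  rw [integral_const_mul, integral_normPdf hv, mul_one]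

lemma integral_mul_jointF (hσ : σ ≠ 0) (hκ : κ ∈ Ioo (0 : ℝ) 1) :
    ∫ β, β * jointF a b τ s σ y β κ = (1 - κ) * y * marginalF a b τ s σ y κ := by
  have hv : 0 < σ ^ 2 * (1 - κ) := by have := sub_pos.mpr hκ.2; positivity
  simp_rw [jointF_eq_marginalF_mul_normPdf hσ hκ, mul_left_comm _ (marginalF _ _ _ _ _ _ _)]
  rw [integral_const_mul, integral_mul_normPdf hv, mul_comm]

lemma integral_sq_mul_jointF (hσ : σ ≠ 0) (hκ : κ ∈ Ioo (0 : ℝ) 1) :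
    ∫ β, β ^ 2 * jointF a b τ s σ y β κ
      = (σ ^ 2 * (1 - κ) + ((1 - κ) * y) ^ 2) * marginalF a b τ s σ y κ := by
  have hv : 0 < σ ^ 2 * (1 - κ) := by have := sub_pos.mpr hκ.2; positivity
  simp_rw [jointF_eq_marginalF_mul_normPdf hσ hκ, mul_left_comm _ (marginalF _ _ _ _ _ _ _)]
  rw [integral_const_mul, integral_sq_mul_normPdf hv, mul_comm]

lemma marginalF_pos (ha : 0 < a) (hb : 0 < b) (hτ : τ ≠ 0) (hσ : σ ≠ 0)
    (hκ : κ ∈ Ioo (0 : ℝ) 1) : 0 < marginalF a b τ s σ y κ :=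
  mul_pos (normPdf_pos (div_pos (by positivity) hκ.1) _ _) (hbPdf_pos ha hb hτ hκ)

lemma integrableOn_marginalF (ha : 0 < a) (hb : 0 < b) (hτ : τ ≠ 0) (hσ : σ ≠ 0) :
    IntegrableOn (marginalF a b τ s σ y) (Ioo 0 1) := by
  refine (integrableOn_hbPdf ha hb hτ).bdd_mul (c := (2 * π * σ ^ 2) ^ (-(1 : ℝ) / 2))
    (by unfold normPdf; fun_prop) ?_
  filter_upwards [ae_restrict_mem measurableSet_Ioo] with κ hκ
  have hv : 0 < σ ^ 2 / κ := div_pos (by positivity) hκ.1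
  rw [Real.norm_of_nonneg (normPdf_pos hv _ _).le]
  refine (normPdf_le hv _ _).trans (Real.rpow_le_rpow_of_nonpos (by positivity) ?_ (by norm_num))
  gcongr
  exact le_div_self (by positivity) hκ.1 hκ.2.le

end Posterior

theorem hb_posterior_variance_decomposition (a b τ s σ y : ℝ) (ha : 0 < a) (hb : 0 < b)
    (hτ : 0 < τ) (hσ : 0 < σ)
    (D Eb Eb2 Ek Ek2 : ℝ)
    (hD : D = ∫ κ in Set.Ioo (0 : ℝ) 1, ∫ β : ℝ, jointF a b τ s σ y β κ)
    (hEb : Eb = (∫ κ in Set.Ioo (0 : ℝ) 1, ∫ β : ℝ, β * jointF a b τ s σ y β κ) / D)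
    (hEb2 : Eb2 = (∫ κ in Set.Ioo (0 : ℝ) 1, ∫ β : ℝ, β ^ 2 * jointF a b τ s σ y β κ) / D)
    (hEk : Ek = (∫ κ in Set.Ioo (0 : ℝ) 1, ∫ β : ℝ, κ * jointF a b τ s σ y β κ) / D)
    (hEk2 : Ek2 = (∫ κ in Set.Ioo (0 : ℝ) 1, ∫ β : ℝ, κ ^ 2 * jointF a b τ s σ y β κ) / D) :
    Eb2 - Eb ^ 2 = σ ^ 2 * (1 - Ek) + y ^ 2 * (Ek2 - Ek ^ 2) := by
  have hg := integrableOn_marginalF (s := s) (y := y) ha hb hτ.ne' hσ.ne'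
  have hG₀ : 0 < ∫ κ in Ioo 0 1, marginalF a b τ s σ y κ :=
    setIntegral_Ioo_pos hg fun κ hκ ↦ marginalF_pos ha hb hτ.ne' hσ.ne' hκ
  rw [hEb, hEb2, hEk, hEk2,
    setIntegral_Ioo_quadratic_mul hg (c₀ := y) (c₁ := -y) (c₂ := 0)
      fun κ hκ ↦ (integral_mul_jointF hσ.ne' hκ).trans (by ring),
    setIntegral_Ioo_quadratic_mul hg (c₀ := σ ^ 2 + y ^ 2) (c₁ := -(σ ^ 2 + 2 * y ^ 2))
      (c₂ := y ^ 2) fun κ hκ ↦ (integral_sq_mul_jointF hσ.ne' hκ).trans (by ring),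
    setIntegral_Ioo_quadratic_mul hg (c₀ := 0) (c₁ := 1) (c₂ := 0)
      fun κ hκ ↦ (integral_const_mul _ _).trans (by rw [integral_jointF hσ.ne' hκ]; ring),
    setIntegral_Ioo_quadratic_mul hg (c₀ := 0) (c₁ := 0) (c₂ := 1)
      fun κ hκ ↦ (integral_const_mul _ _).trans (by rw [integral_jointF hσ.ne' hκ]; ring),
    hD, setIntegral_congr_fun measurableSet_Ioo fun κ hκ ↦ integral_jointF hσ.ne' hκ]
  field_simp
  ring
end
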